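/- Suppose the partition $\{I_1, \dots, I_S\}$ of $\{1, \dots, n\}$ has equal block sizes $n/S$, and let $f: \mathbb{R} \to \mathbb{R}$ be bounded with $y_1, \dots, y_n$ i.i.d. Then $\mathrm{Var}\Big[\sum_{s=1}^S \big(\sum_{i,l \in I_s, i \ne l} f(y_i) f(y_l)\big)\Big] = S\big[4 m(m-1)\, \mathrm{Var}\{f(y_1)f(y_2)\} + 8 m(m-1)(m-2)\, \mathrm{Cov}\{f(y_1)f(y_2), f(y_1)f(y_3)\}\big]$ up to lower-order terms, where $m = n/S$; consequently $\frac{1}{n^2}\mathrm{Var}\big[\sum_{s=1}^S \sum_{i,l \in I_s, i \ne l} f(y_i)f(y_l)\big] = O(S^{-1}) + O(n/S^2)$, which converges to 0 whenever $S \to \infty$ and $S/\sqrt{n} \to \infty$. -/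

import Mathlib

/-!
Write the statistic as `∑ W p` over the ordered pairs `p = (i, l)`, `i ≠ l`, lying in a common
block, with `W (i, l) = f (y i) * f (y l)`. By independence, `W p` and `W q` are uncorrelated
unless `p` and `q` share an index, and then they lie in the same block. So each of the at most
`S m²` pairs is correlated with at most `4 m` others, every covariance is `O(Cf⁴)`, and the
variance is `O(S m³) = O(n² · n / S²)`.
-/

open MeasureTheory Filter Finset ProbabilityTheory Function

abbrev SharesIndex {α : Type*} (p q : α × α) : Prop :=
  p.1 = q.1 ∨ p.1 = q.2 ∨ p.2 = q.1 ∨ p.2 = q.2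

namespace Finset

variable {κ α : Type*} [Fintype κ] [DecidableEq α]

def blockPairs (I : κ → Finset α) : Finset (α × α) :=
  univ.biUnion fun s ↦ (I s).offDiag

lemma sum_sum_erase_eq_sum_offDiag {M : Type*} [AddCommMonoid M] (t : Finset α)
    (h : α → α → M) : ∑ i ∈ t, ∑ l ∈ t.erase i, h i l = ∑ p ∈ t.offDiag, h p.1 p.2 :=
  (sum_finset_product' _ _ _ fun p ↦ by
    rw [mem_offDiag, mem_erase, ne_comm]; tauto).symm

lemma sum_blockPairs {M : Type*} [AddCommMonoid M] {I : κ → Finset α}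
    (hI : Pairwise (Disjoint on I)) (h : α → α → M) :
    ∑ p ∈ blockPairs I, h p.1 p.2 = ∑ s, ∑ i ∈ I s, ∑ l ∈ (I s).erase i, h i l := by
  have hoff : (↑(univ : Finset κ) : Set κ).PairwiseDisjoint fun s ↦ (I s).offDiag :=
    fun s _ t _ hst ↦ disjoint_left.2 fun p hps hpt ↦
      disjoint_left.1 (hI hst) (mem_offDiag.1 hps).1 (mem_offDiag.1 hpt).1
  rw [blockPairs, sum_biUnion hoff]
  simp_rw [sum_sum_erase_eq_sum_offDiag]

lemma card_blockPairs_le {I : κ → Finset α} {m : ℕ} (hm : ∀ s, #(I s) ≤ m) :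
    #(blockPairs I) ≤ Fintype.card κ * m ^ 2 :=
  calc #(blockPairs I) ≤ ∑ s, #(I s).offDiag := card_biUnion_le
    _ ≤ ∑ _s : κ, m ^ 2 := sum_le_sum fun s _ ↦ by
        rw [offDiag_card, sq]
        exact (Nat.sub_le _ _).trans (Nat.mul_le_mul (hm s) (hm s))
    _ = Fintype.card κ * m ^ 2 := by rw [sum_const, card_univ, smul_eq_mul]

lemma card_sharesIndex_blockPairs_le {I : κ → Finset α} {m : ℕ} (hI : Pairwise (Disjoint on I))
    (hm : ∀ s, #(I s) ≤ m) {p : α × α} (hp : p ∈ blockPairs I) :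
    #{q ∈ blockPairs I | SharesIndex p q} ≤ 4 * m := by
  obtain ⟨s, -, hps⟩ := mem_biUnion.1 hp
  obtain ⟨hp1, hp2, -⟩ := mem_offDiag.1 hps
  have hsub : {q ∈ blockPairs I | SharesIndex p q}
      ⊆ ({p.1, p.2} ×ˢ I s) ∪ (I s ×ˢ {p.1, p.2}) := by
    intro q hq
    obtain ⟨hq, hshare⟩ := mem_filter.1 hq
    obtain ⟨t, -, hqt⟩ := mem_biUnion.1 hq
    obtain ⟨hq1, hq2, -⟩ := mem_offDiag.1 hqt
    obtain rfl : t = s := by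
      by_contra hts
      have hd := disjoint_left.1 (hI hts)
      rcases hshare with h | h | h | h
      · exact hd hq1 (h ▸ hp1)
      · exact hd hq2 (h ▸ hp1)
      · exact hd hq1 (h ▸ hp2)
      · exact hd hq2 (h ▸ hp2)
    simp only [mem_union, mem_product, mem_insert, mem_singleton]
    rcases hshare with h | h | h | h <;> simp_all
  calc #{q ∈ blockPairs I | SharesIndex p q}
      ≤ #(({p.1, p.2} ×ˢ I s) ∪ (I s ×ˢ {p.1, p.2})) := card_le_card hsub
    _ ≤ 2 * m + m * 2 := by
        refine (card_union_le _ _).trans (add_le_add ?_ ?_) <;> rw [card_product]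
        · exact Nat.mul_le_mul card_le_two (hm s)
        · exact Nat.mul_le_mul (hm s) card_le_two
    _ = 4 * m := by ring

end Finset

namespace ProbabilityTheory

variable {Ω : Type*} [MeasurableSpace Ω] {μ : Measure Ω} [IsProbabilityMeasure μ]

lemma abs_covariance_le_of_abs_le {X Y : Ω → ℝ} {a b : ℝ}
    (hXm : AEStronglyMeasurable X μ) (hYm : AEStronglyMeasurable Y μ)
    (hX : ∀ᵐ ω ∂μ, |X ω| ≤ a) (hY : ∀ᵐ ω ∂μ, |Y ω| ≤ b) :
    |cov[X, Y; μ]| ≤ 2 * a * b := by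
  have hXY : ∀ᵐ ω ∂μ, ‖(X * Y) ω‖ ≤ a * b := by
    filter_upwards [hX, hY] with ω hx hy
    rw [Pi.mul_apply, Real.norm_eq_abs, abs_mul]
    exact mul_le_mul hx hy (abs_nonneg _) ((abs_nonneg _).trans hx)
  have hEXY : |μ[X * Y]| ≤ a * b := by
    simpa using norm_integral_le_of_norm_le_const hXY
  have hEX : |μ[X]| ≤ a := by
    simpa using norm_integral_le_of_norm_le_const (μ := μ) (f := X) (by simpa using hX)
  have hEY : |μ[Y]| ≤ b := by
    simpa using norm_integral_le_of_norm_le_const (μ := μ) (f := Y) (by simpa using hY)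
  rw [covariance_eq_sub (MemLp.of_bound hXm a (by simpa using hX))
    (MemLp.of_bound hYm b (by simpa using hY))]
  calc |μ[X * Y] - μ[X] * μ[Y]| ≤ |μ[X * Y]| + |μ[X]| * |μ[Y]| := by
        rw [← abs_mul]; exact abs_sub _ _
    _ ≤ a * b + a * b := by
        gcongr
        exact (abs_nonneg _).trans hEX
    _ = 2 * a * b := by ring

lemma variance_sum_le_of_dependency {ι : Type*} {X : ι → Ω → ℝ} {s : Finset ι} {B : ℝ} {d : ℕ}
    (R : ι → ι → Prop) [DecidableRel R]
    (hXm : ∀ i ∈ s, AEStronglyMeasurable (X i) μ) (hX : ∀ i ∈ s, ∀ᵐ ω ∂μ, |X i ω| ≤ B)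
    (hindep : ∀ i ∈ s, ∀ j ∈ s, ¬ R i j → IndepFun (X i) (X j) μ)
    (hdeg : ∀ i ∈ s, #{j ∈ s | R i j} ≤ d) :
    Var[fun ω ↦ ∑ i ∈ s, X i ω; μ] ≤ #s * d * (2 * B ^ 2) := by
  have hL2 : ∀ i ∈ s, MemLp (X i) 2 μ := fun i hi ↦
    MemLp.of_bound (hXm i hi) B (by simpa using hX i hi)
  have hrow : ∀ i ∈ s, ∑ j ∈ s, cov[X i, X j; μ] ≤ d * (2 * B ^ 2) := by
    intro i hi
    rw [← sum_filter_of_ne fun j hj hcov ↦ by_contra fun hR ↦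
      hcov ((hindep i hi j hj hR).covariance_eq_zero (hL2 i hi) (hL2 j hj))]
    calc ∑ j ∈ s with R i j, cov[X i, X j; μ]
        ≤ #{j ∈ s | R i j} • (2 * B ^ 2) := by
          refine sum_le_card_nsmul _ _ _ fun j hj ↦ ?_
          have hj := (mem_filter.1 hj).1
          calc cov[X i, X j; μ] ≤ |cov[X i, X j; μ]| := le_abs_self _
            _ ≤ 2 * B * B :=
                abs_covariance_le_of_abs_le (hXm i hi) (hXm j hj) (hX i hi) (hX j hj)
            _ = 2 * B ^ 2 := by ring
      _ ≤ d * (2 * B ^ 2) := by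
          rw [nsmul_eq_mul]
          gcongr
          exact_mod_cast hdeg i hi
  rw [variance_fun_sum' hL2]
  calc ∑ i ∈ s, ∑ j ∈ s, cov[X i, X j; μ] ≤ #s • (d * (2 * B ^ 2)) :=
        sum_le_card_nsmul _ _ _ hrow
    _ = #s * d * (2 * B ^ 2) := by rw [nsmul_eq_mul, mul_assoc]

lemma variance_blockUStatistic_le {κ α : Type*} [Fintype κ] [DecidableEq α]
    {g : α → Ω → ℝ} (hg : ∀ i, Measurable (g i)) (hindep : iIndepFun g μ)
    {C : ℝ} (hgC : ∀ i ω, |g i ω| ≤ C)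
    {I : κ → Finset α} (hI : Pairwise (Disjoint on I)) {m : ℕ} (hm : ∀ s, #(I s) ≤ m) :
    Var[fun ω ↦ ∑ s, ∑ i ∈ I s, ∑ l ∈ (I s).erase i, g i ω * g l ω; μ]
      ≤ Fintype.card κ * m ^ 3 * (8 * C ^ 4) := by
  have hsum : (fun ω ↦ ∑ s, ∑ i ∈ I s, ∑ l ∈ (I s).erase i, g i ω * g l ω)
      = fun ω ↦ ∑ p ∈ blockPairs I, (g p.1 * g p.2) ω := by
    funext ω
    exact (sum_blockPairs hI fun i l ↦ g i ω * g l ω).symm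
  have hbound : ∀ p : α × α, ∀ ω, |(g p.1 * g p.2) ω| ≤ C ^ 2 := fun p ω ↦ by
    rw [Pi.mul_apply, abs_mul, sq]
    exact mul_le_mul (hgC p.1 ω) (hgC p.2 ω) (abs_nonneg _) ((abs_nonneg _).trans (hgC p.1 ω))
  have hvar := variance_sum_le_of_dependency (μ := μ) (s := blockPairs I) (d := 4 * m) SharesIndex
    (fun p _ ↦ ((hg p.1).mul (hg p.2)).aestronglyMeasurable)
    (fun p _ ↦ ae_of_all _ (hbound p))
    (fun p _ q _ hpq ↦ by
      simp only [SharesIndex, not_or] at hpq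
      exact hindep.indepFun_mul_mul hg _ _ _ _ hpq.1 hpq.2.1 hpq.2.2.1 hpq.2.2.2)
    (fun p hp ↦ card_sharesIndex_blockPairs_le hI hm hp)
  have hcard : (#(blockPairs I) : ℝ) ≤ Fintype.card κ * m ^ 2 := by
    exact_mod_cast card_blockPairs_le hm
  rw [hsum]
  calc _ ≤ #(blockPairs I) * ((4 * m : ℕ) : ℝ) * (2 * (C ^ 2) ^ 2) := hvar
    _ ≤ Fintype.card κ * m ^ 2 * ((4 * m : ℕ) : ℝ) * (2 * (C ^ 2) ^ 2) := by gcongr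
    _ = Fintype.card κ * m ^ 3 * (8 * C ^ 4) := by push_cast; ring

end ProbabilityTheory

lemma tendsto_one_div_add_div_sq_of_div_sqrt {ι : Type*} {l : Filter ι} {S n : ι → ℝ}
    (hn : ∀ k, 0 ≤ n k) (hS : Tendsto S l atTop)
    (hSn : Tendsto (fun k ↦ S k / √(n k)) l atTop) :
    Tendsto (fun k ↦ 1 / S k + n k / S k ^ 2) l (nhds 0) := by
  have hsq (k : ι) : (√(n k) / S k) ^ 2 = n k / S k ^ 2 := by
    rw [div_pow, Real.sq_sqrt (hn k)]
  rw [← zero_add 0]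
  refine Tendsto.add ?_ ?_
  · simpa only [one_div, Pi.inv_def] using hS.inv_tendsto_atTop
  · simpa [hsq] using hSn.inv_tendsto_atTop.pow 2

theorem stmt_7_general
    {Ω : Type*} [MeasurableSpace Ω] (P : Measure Ω) [IsProbabilityMeasure P]
    (y : ℕ → Ω → ℝ) (hymeas : ∀ i, Measurable (y i))
    (hiid : iIndepFun y P)
    (f : ℝ → ℝ) (hfmeas : Measurable f) (Cf : ℝ) (hfbdd : ∀ x, |f x| ≤ Cf)
    (n S : ℕ → ℕ)
    (hdvd : ∀ k, S k ∣ n k)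
    (I : (k : ℕ) → Fin (S k) → Finset ℕ)
    (hdisj : ∀ k, ∀ s t : Fin (S k), s ≠ t → Disjoint (I k s) (I k t))
    (hcard : ∀ k, ∀ s : Fin (S k), (I k s).card = n k / S k)
    (hS : Tendsto (fun k => (S k : ℝ)) atTop atTop)
    (hSn : Tendsto (fun k => (S k : ℝ) / Real.sqrt (n k)) atTop atTop) :
    (∃ C : ℝ, ∀ k : ℕ,
        (1 / (n k : ℝ) ^ 2) *
          variance (fun ω => ∑ s : Fin (S k), ∑ i ∈ I k s,
            ∑ l ∈ (I k s).erase i, f (y i ω) * f (y l ω)) P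
        ≤ C * (1 / (S k : ℝ) + (n k : ℝ) / (S k : ℝ) ^ 2)) ∧
    Tendsto (fun k : ℕ =>
        (1 / (n k : ℝ) ^ 2) *
          variance (fun ω => ∑ s : Fin (S k), ∑ i ∈ I k s,
            ∑ l ∈ (I k s).erase i, f (y i ω) * f (y l ω)) P)
      atTop (nhds 0) := by
  have hbound (k : ℕ) : (1 / (n k : ℝ) ^ 2) *
      variance (fun ω => ∑ s : Fin (S k), ∑ i ∈ I k s,
        ∑ l ∈ (I k s).erase i, f (y i ω) * f (y l ω)) P
      ≤ 8 * Cf ^ 4 * (1 / (S k : ℝ) + (n k : ℝ) / (S k : ℝ) ^ 2) := by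
    set m := n k / S k
    have hvar := variance_blockUStatistic_le (μ := P) (fun i ↦ hfmeas.comp (hymeas i))
      (hiid.comp (fun _ ↦ f) fun _ ↦ hfmeas) (fun i ω ↦ hfbdd (y i ω))
      (fun s t hst ↦ hdisj k s t hst) fun s ↦ (hcard k s).le
    rw [Fintype.card_fin] at hvar
    have hn : (n k : ℝ) = m * S k := by exact_mod_cast (Nat.div_mul_cancel (hdvd k)).symm
    calc _ ≤ 1 / (n k : ℝ) ^ 2 * (S k * m ^ 3 * (8 * Cf ^ 4)) := by gcongr; exact hvar
      _ = 8 * Cf ^ 4 * (n k / (S k : ℝ) ^ 2) := by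
        rw [hn]
        rcases eq_or_ne (m : ℝ) 0 with hm | hm
        · simp [hm]
        rcases eq_or_ne (S k : ℝ) 0 with hSk | hSk
        · simp [hSk]
        field_simp
      _ ≤ 8 * Cf ^ 4 * (1 / (S k : ℝ) + (n k : ℝ) / (S k : ℝ) ^ 2) := by
        gcongr
        exact le_add_of_nonneg_left (by positivity)
  refine ⟨⟨_, hbound⟩, squeeze_zero (fun k ↦ mul_nonneg (by positivity) (variance_nonneg _ _))
    hbound ?_⟩
  simpa using (tendsto_one_div_add_div_sq_of_div_sqrt (fun k ↦ (n k).cast_nonneg) hS hSn).const_mul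
    (8 * Cf ^ 4)

/-- For i.i.d. data, bounded `f`, and a partition of `{1,…,n}` into `S` blocks of
equal size `m = n/S`, the normalized variance of the block U-statistic
`∑_s ∑_{i≠l ∈ I_s} f(y_i) f(y_l)` is `O(S⁻¹) + O(n/S²)`, hence tends to `0`
whenever `S → ∞` and `S/√n → ∞`. -/
theorem stmt_7
    {Ω : Type*} [MeasurableSpace Ω] (P : Measure Ω) [IsProbabilityMeasure P]
    (y : ℕ → Ω → ℝ) (hymeas : ∀ i, Measurable (y i))
    (hiid : iIndepFun y P)
    (hident : ∀ i j : ℕ, Measure.map (y i) P = Measure.map (y j) P)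
    (f : ℝ → ℝ) (hfmeas : Measurable f) (Cf : ℝ) (hfbdd : ∀ x, |f x| ≤ Cf)
    (n S : ℕ → ℕ) (hn : ∀ k, 0 < n k) (hSpos : ∀ k, 0 < S k)
    (hdvd : ∀ k, S k ∣ n k)
    (I : (k : ℕ) → Fin (S k) → Finset ℕ)
    (hdisj : ∀ k, ∀ s t : Fin (S k), s ≠ t → Disjoint (I k s) (I k t))
    (hcover : ∀ k, (Finset.univ : Finset (Fin (S k))).biUnion (I k)
        = Finset.range (n k))
    (hcard : ∀ k, ∀ s : Fin (S k), (I k s).card = n k / S k)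
    (hS : Tendsto (fun k => (S k : ℝ)) atTop atTop)
    (hSn : Tendsto (fun k => (S k : ℝ) / Real.sqrt (n k)) atTop atTop) :
    (∃ C : ℝ, ∀ k : ℕ,
        (1 / (n k : ℝ) ^ 2) *
          variance (fun ω => ∑ s : Fin (S k), ∑ i ∈ I k s,
            ∑ l ∈ (I k s).erase i, f (y i ω) * f (y l ω)) P
        ≤ C * (1 / (S k : ℝ) + (n k : ℝ) / (S k : ℝ) ^ 2)) ∧
    Tendsto (fun k : ℕ =>
        (1 / (n k : ℝ) ^ 2) *
          variance (fun ω => ∑ s : Fin (S k), ∑ i ∈ I k s,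
            ∑ l ∈ (I k s).erase i, f (y i ω) * f (y l ω)) P)
      atTop (nhds 0) :=
  stmt_7_general P y hymeas hiid f hfmeas Cf hfbdd n S hdvd I hdisj hcard hS hSn
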